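/- arXiv:2406.19889 — 4 statements merged into one kernel-verified Lean document; each statement's English description precedes it below -/
import Mathlib

section
/- Let X be a real Hilbert space, S : X → X a continuous linear operator satisfying ⟨S x, x⟩ ≤ c ‖x‖² for all x ∈ X with a constant c ≥ 0, and let τ > 0 with τ c < 2, so that R₋ := I − (τ/2) S is invertible. Then the Cayley-type operator R̂ := (I + (τ/2) S) R₋^{-1} satisfies the operator norm bound ‖R̂‖ ≤ (1 + τc/2)/(1 − τc/2); equivalently, for every x ∈ X one has ‖x + (τ/2) S x‖ ≤ ((1 + τc/2)/(1 − τc/2)) ‖x − (τ/2) S x‖. In particular, if c = 0 then ‖R̂‖ ≤ 1. -/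
open scoped RealInnerProductSpace

lemma stmt6_div (b u t p : ℝ) (hb : 1 - b ≠ 0) :
    (1 + b) ^ 2 / (1 - b) ^ 2 * (u ^ 2 - 2 * p + t ^ 2) - (u ^ 2 + 2 * p + t ^ 2)
      = (4 * (b * (u ^ 2 + t ^ 2) - (1 + b ^ 2) * p)) / (1 - b) ^ 2 := by
  field_simp
  ring

lemma stmt6_aux (b u t p : ℝ) (hb0 : 0 ≤ b) (hb1 : b ≤ 1) (hu : 0 ≤ u) (ht : 0 ≤ t)
    (h1 : p ≤ b * u ^ 2) (h2 : p ≤ t * u) : (1 + b ^ 2) * p ≤ b * (u ^ 2 + t ^ 2) := by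
  rcases le_total t (b * u) with h | h
  · have hbt : b * t ≤ u := by nlinarith
    nlinarith [mul_nonneg (sub_nonneg.2 h) (sub_nonneg.2 hbt)]
  · nlinarith [mul_nonneg hb0 (mul_nonneg (sub_nonneg.2 h) (by positivity : (0:ℝ) ≤ t + b * u))]

/-- Let `X` be a real Hilbert space, `S` a continuous linear operator
with `⟪S x, x⟫ ≤ c ‖x‖²` for all `x`, `c ≥ 0`, and `τ > 0` with `τ c < 2`, so that
`R₋ := I − (τ/2) S` is invertible.  Then the Cayley-type operator `R̂ := (I + (τ/2) S) R₋⁻¹`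
satisfies `‖R̂‖ ≤ (1 + τc/2)/(1 − τc/2)`; equivalently, for every `x` one has
`‖x + (τ/2) S x‖ ≤ ((1 + τc/2)/(1 − τc/2)) ‖x − (τ/2) S x‖`.  In particular if `c = 0`
then `‖R̂‖ ≤ 1`. -/
theorem stmt6
    {X : Type*} [NormedAddCommGroup X] [InnerProductSpace ℝ X] [CompleteSpace X]
    (S : X →L[ℝ] X) (c : ℝ) (hc : 0 ≤ c)
    (hS : ∀ x : X, ⟪S x, x⟫ ≤ c * ‖x‖ ^ 2)
    (τ : ℝ) (hτ : 0 < τ) (hτc : τ * c < 2) :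
    (∀ x : X, ‖x + (τ / 2) • S x‖ ≤
        ((1 + τ * c / 2) / (1 - τ * c / 2)) * ‖x - (τ / 2) • S x‖) ∧
    (∀ Rinv : X →L[ℝ] X,
      (∀ x : X, Rinv (x - (τ / 2) • S x) = x) →
      (∀ y : X, Rinv y - (τ / 2) • S (Rinv y) = y) →
      ‖(ContinuousLinearMap.id ℝ X + (τ / 2) • S).comp Rinv‖ ≤
          (1 + τ * c / 2) / (1 - τ * c / 2) ∧
        (c = 0 → ‖(ContinuousLinearMap.id ℝ X + (τ / 2) • S).comp Rinv‖ ≤ 1)) := by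
  have hb0 : 0 ≤ τ * c / 2 := by positivity
  have hb1 : τ * c / 2 < 1 := by linarith
  have hKpos : (0:ℝ) < 1 - τ * c / 2 := by linarith
  have hK : (0:ℝ) ≤ (1 + τ * c / 2) / (1 - τ * c / 2) := by positivity
  have key : ∀ x : X, ‖x + (τ / 2) • S x‖ ≤
      ((1 + τ * c / 2) / (1 - τ * c / 2)) * ‖x - (τ / 2) • S x‖ := by
    intro x
    set a : ℝ := τ / 2 with ha
    have ha0 : 0 < a := by positivity
    set u : ℝ := ‖x‖ with hu
    set t : ℝ := a * ‖S x‖ with htt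
    set p : ℝ := a * ⟪S x, x⟫ with hp
    have hu0 : 0 ≤ u := norm_nonneg x
    have ht0 : 0 ≤ t := by positivity
    have hp1 : p ≤ (τ * c / 2) * u ^ 2 := by
      have := hS x
      rw [hp, hu]
      calc a * ⟪S x, x⟫ ≤ a * (c * ‖x‖ ^ 2) := by
            exact mul_le_mul_of_nonneg_left this ha0.le
        _ = (τ * c / 2) * ‖x‖ ^ 2 := by rw [ha]; ring
    have hp2 : p ≤ t * u := by
      have hcs : ⟪S x, x⟫ ≤ ‖S x‖ * ‖x‖ := real_inner_le_norm (S x) x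
      rw [hp, htt, hu]
      calc a * ⟪S x, x⟫ ≤ a * (‖S x‖ * ‖x‖) := mul_le_mul_of_nonneg_left hcs ha0.le
        _ = a * ‖S x‖ * ‖x‖ := by ring
    have e1 : ‖x + a • S x‖ ^ 2 = u ^ 2 + 2 * p + t ^ 2 := by
      rw [@norm_add_sq_real, real_inner_smul_right, real_inner_comm, norm_smul,
        Real.norm_eq_abs, abs_of_pos ha0, hu, htt, hp]
    have e2 : ‖x - a • S x‖ ^ 2 = u ^ 2 - 2 * p + t ^ 2 := by
      rw [@norm_sub_sq_real, real_inner_smul_right, real_inner_comm, norm_smul,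
        Real.norm_eq_abs, abs_of_pos ha0, hu, htt, hp]
    have hauxi : (1 + (τ * c / 2) ^ 2) * p ≤ (τ * c / 2) * (u ^ 2 + t ^ 2) :=
      stmt6_aux (τ * c / 2) u t p hb0 hb1.le hu0 ht0 hp1 hp2
    have hsq : ‖x + a • S x‖ ^ 2 ≤
        (((1 + τ * c / 2) / (1 - τ * c / 2)) * ‖x - a • S x‖) ^ 2 := by
      rw [mul_pow, e1, e2, div_pow]
      have h := stmt6_div (τ * c / 2) u t p (by linarith)
      have : 0 ≤ (1 + τ * c / 2) ^ 2 / (1 - τ * c / 2) ^ 2 * (u ^ 2 - 2 * p + t ^ 2)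
          - (u ^ 2 + 2 * p + t ^ 2) := by
        rw [h]
        apply div_nonneg _ (by positivity)
        linarith
      linarith
    have h1 : 0 ≤ ‖x + a • S x‖ := norm_nonneg _
    have h2 : 0 ≤ ((1 + τ * c / 2) / (1 - τ * c / 2)) * ‖x - a • S x‖ := by positivity
    nlinarith [hsq, h1, h2]
  refine ⟨key, fun Rinv hR1 hR2 => ?_⟩
  have hbound : ‖(ContinuousLinearMap.id ℝ X + (τ / 2) • S).comp Rinv‖ ≤
      (1 + τ * c / 2) / (1 - τ * c / 2) := by
    apply ContinuousLinearMap.opNorm_le_bound _ hK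
    intro y
    have hval : ((ContinuousLinearMap.id ℝ X + (τ / 2) • S).comp Rinv) y
        = Rinv y + (τ / 2) • S (Rinv y) := by simp
    rw [hval]
    calc ‖Rinv y + (τ / 2) • S (Rinv y)‖
        ≤ ((1 + τ * c / 2) / (1 - τ * c / 2)) * ‖Rinv y - (τ / 2) • S (Rinv y)‖ :=
          key (Rinv y)
      _ = ((1 + τ * c / 2) / (1 - τ * c / 2)) * ‖y‖ := by rw [hR2 y]
  refine ⟨hbound, fun hc0 => ?_⟩
  have : (1 + τ * c / 2) / (1 - τ * c / 2) = 1 := by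
    rw [hc0]; norm_num
  rw [← this]
  exact hbound
end

section
/- Let X be a real Banach space, t ∈ ℝ, h > 0, τ > 0, and let x : ℝ → X be three times continuously differentiable on [t − τ, t + h]. Define the rectangle-rule defect δ(s) := ∫_s^{s+h} x'(r) dr − h x'(s + h). Then ‖δ(t) − δ(t − τ)‖ ≤ τ (h²/2) · sup_{s ∈ [t − τ, t + h]} ‖x'''(s)‖. In particular, with h = τ/2 the difference of two consecutive IMEX half-step defects is bounded by (τ³/8) · sup ‖x'''‖. -/
open Set

/-- Let `X` be a real Banach space, `t ∈ ℝ`, `h > 0`, `τ > 0`, and let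
`x : ℝ → X` be three times continuously differentiable on `[t − τ, t + h]`.  With the
rectangle-rule defect `δ(s) := ∫_s^{s+h} x'(r) dr − h x'(s + h)` one has
`‖δ(t) − δ(t − τ)‖ ≤ τ (h²/2) sup_{s ∈ [t−τ, t+h]} ‖x'''(s)‖` (with `h = τ/2` this bounds
the difference of two consecutive IMEX half-step defects by `(τ³/8) sup ‖x'''‖`). -/
theorem stmt9
    {X : Type*} [NormedAddCommGroup X] [NormedSpace ℝ X] [CompleteSpace X]
    (t h τ : ℝ) (hh : 0 < h) (hτ : 0 < τ) (x x' x'' x''' : ℝ → X)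
    (hx' : ∀ s ∈ Icc (t - τ) (t + h), HasDerivWithinAt x (x' s) (Icc (t - τ) (t + h)) s)
    (hx'' : ∀ s ∈ Icc (t - τ) (t + h), HasDerivWithinAt x' (x'' s) (Icc (t - τ) (t + h)) s)
    (hx''' : ∀ s ∈ Icc (t - τ) (t + h), HasDerivWithinAt x'' (x''' s) (Icc (t - τ) (t + h)) s)
    (hx'''c : ContinuousOn x''' (Icc (t - τ) (t + h)))
    (δ : ℝ → X)
    (hδ : ∀ s : ℝ, δ s = (∫ r in s..(s + h), x' r) - h • x' (s + h)) :
    ‖δ t - δ (t - τ)‖ ≤ τ * (h ^ 2 / 2) * ⨆ s : Icc (t - τ) (t + h), ‖x''' (s : ℝ)‖ := by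
  set I := Icc (t - τ) (t + h) with hI
  have hττ : t - τ ≤ t + h := by linarith
  set M := ⨆ s : I, ‖x''' (s : ℝ)‖ with hM
  obtain ⟨C, hC⟩ := (isCompact_Icc).exists_bound_of_continuousOn hx'''c
  have hbdd : BddAbove (Set.range fun s : I => ‖x''' (s : ℝ)‖) := by
    refine ⟨C, ?_⟩
    rintro _ ⟨s, rfl⟩
    exact hC s s.2
  have hMle : ∀ u ∈ I, ‖x''' u‖ ≤ M := fun u hu => le_ciSup hbdd ⟨u, hu⟩
  have hM0 : 0 ≤ M := le_trans (norm_nonneg _) (hMle _ ⟨le_refl _, hττ⟩)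
  have hxc : ContinuousOn x I := fun u hu => (hx' u hu).continuousWithinAt
  have hx'c : ContinuousOn x' I := fun u hu => (hx'' u hu).continuousWithinAt
  have hx''c : ContinuousOn x'' I := fun u hu => (hx''' u hu).continuousWithinAt
  -- generic FTC helper
  have key : ∀ (f f' : ℝ → X), (∀ s ∈ I, HasDerivWithinAt f (f' s) I s) →
      ContinuousOn f' I → ∀ a b, t - τ ≤ a → a ≤ b → b ≤ t + h →
      (∫ r in a..b, f' r) = f b - f a := by
    intro f f' hf hf'c a b ha hab hb
    have hsub : Icc a b ⊆ I := Icc_subset_Icc ha hb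
    have hfc : ContinuousOn f I := fun u hu => (hf u hu).continuousWithinAt
    refine intervalIntegral.integral_eq_sub_of_hasDeriv_right_of_le hab (hfc.mono hsub) ?_ ?_
    · intro r hr
      have hrI : r ∈ I := hsub (Ioo_subset_Icc_self hr)
      have : HasDerivAt f (f' r) r := by
        refine (hf r hrI).hasDerivAt (Icc_mem_nhds ?_ ?_)
        · linarith [hr.1]
        · linarith [hr.2]
      exact this.hasDerivWithinAt
    · exact (hf'c.mono hsub).intervalIntegrable_of_Icc hab
  -- x'' increment bound
  have hstep2 : ∀ a b, t - τ ≤ a → a ≤ b → b ≤ t + h → ‖x'' b - x'' a‖ ≤ M * (b - a) := by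
    intro a b ha hab hb
    rw [← key x'' x''' hx''' hx'''c a b ha hab hb]
    have := intervalIntegral.norm_integral_le_of_norm_le_const
      (f := x''') (a := a) (b := b) (C := M) ?_
    · calc ‖∫ r in a..b, x''' r‖ ≤ M * |b - a| := this
        _ = M * (b - a) := by rw [abs_of_nonneg (by linarith)]
    · intro u hu
      rw [uIoc_of_le hab] at hu
      exact hMle u ⟨by linarith [hu.1], by linarith [hu.2]⟩
  -- Taylor-type bound on the derivative of the defect
  have hderiv_bound : ∀ s ∈ Icc (t - τ) t,
      ‖x' (s + h) - x' s - h • x'' (s + h)‖ ≤ M * (h ^ 2 / 2) := by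
    intro s hs
    have hs1 : t - τ ≤ s := hs.1
    have hs2 : s + h ≤ t + h := by linarith [hs.2]
    have hsub : Icc s (s + h) ⊆ I := Icc_subset_Icc hs1 hs2
    set ψ : ℝ → X := fun u => x' u - (u - s) • x'' (s + h) with hψ
    have hftc : (∫ u in s..(s + h), (x'' u - x'' (s + h))) = ψ (s + h) - ψ s := by
      refine intervalIntegral.integral_eq_sub_of_hasDeriv_right_of_le (by linarith) ?_ ?_ ?_
      · exact (hx'c.mono hsub).sub
          ((continuousOn_id.sub continuousOn_const).smul continuousOn_const)
      · intro r hr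
        have hrI : r ∈ I := hsub (Ioo_subset_Icc_self hr)
        have h1 : HasDerivAt x' (x'' r) r := by
          refine (hx'' r hrI).hasDerivAt (Icc_mem_nhds ?_ ?_)
          · linarith [hr.1]
          · linarith [hr.2]
        have h2 : HasDerivAt (fun u : ℝ => (u - s) • x'' (s + h)) ((1:ℝ) • x'' (s + h)) r :=
          ((hasDerivAt_id r).sub_const s).smul_const _
        have := (h1.sub h2)
        rw [one_smul] at this
        exact this.hasDerivWithinAt
      · refine ContinuousOn.intervalIntegrable_of_Icc (by linarith) ?_
        exact (hx''c.mono hsub).sub continuousOn_const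
    have hψval : ψ (s + h) - ψ s = x' (s + h) - x' s - h • x'' (s + h) := by
      simp only [hψ]
      rw [show s + h - s = h by ring, show s - s = 0 by ring, zero_smul]
      abel
    rw [← hψval, ← hftc]
    have hcomp : (∫ u in s..(s + h), M * ((s + h) - u)) = M * (h ^ 2 / 2) := by
      rw [intervalIntegral.integral_const_mul]
      rw [intervalIntegral.integral_sub intervalIntegrable_const intervalIntegral.intervalIntegrable_id]
      rw [intervalIntegral.integral_const, integral_id, smul_eq_mul]
      ring
    have hnorm : ‖∫ u in s..(s + h), (x'' u - x'' (s + h))‖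
        ≤ |∫ u in s..(s + h), M * ((s + h) - u)| := by
      refine intervalIntegral.norm_integral_le_abs_of_norm_le ?_ ?_
      · refine Filter.eventually_of_mem (MeasureTheory.self_mem_ae_restrict measurableSet_uIoc) ?_
        intro u hu
        rw [uIoc_of_le (by linarith : s ≤ s + h)] at hu
        have huI : u ∈ Icc s (s + h) := Ioc_subset_Icc_self hu
        have h1 := hstep2 u (s + h) (by linarith [huI.1]) (by linarith [huI.2]) (by linarith)
        calc ‖x'' u - x'' (s + h)‖ = ‖x'' (s + h) - x'' u‖ := by rw [norm_sub_rev]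
          _ ≤ M * ((s + h) - u) := h1
      · exact (continuousOn_const.mul (continuousOn_const.sub continuousOn_id)).intervalIntegrable_of_Icc (by linarith)
    calc ‖∫ u in s..(s + h), (x'' u - x'' (s + h))‖
        ≤ |∫ u in s..(s + h), M * ((s + h) - u)| := hnorm
      _ = M * (h ^ 2 / 2) := by rw [hcomp, abs_of_nonneg (by positivity)]
  -- rewrite δ via FTC
  have hδeq : ∀ s ∈ Icc (t - τ) t, δ s = x (s + h) - x s - h • x' (s + h) := by
    intro s hs
    rw [hδ s, key x x' hx' hx'c s (s + h) hs.1 (by linarith) (by linarith [hs.2])]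
  set g : ℝ → X := fun s => x (s + h) - x s - h • x' (s + h) with hg
  have hgderiv : ∀ s ∈ Icc (t - τ) t,
      HasDerivWithinAt g (x' (s + h) - x' s - h • x'' (s + h)) (Icc (t - τ) t) s := by
    intro s hs
    have hmem : s + h ∈ I := ⟨by linarith [hs.1], by linarith [hs.2]⟩
    have hmaps : MapsTo (fun u : ℝ => u + h) (Icc (t - τ) t) I := by
      intro u hu
      simp only [mem_Icc] at hu ⊢
      constructor <;> linarith [hu.1, hu.2]
    have hshift : HasDerivWithinAt (fun u : ℝ => u + h) (1 : ℝ) (Icc (t - τ) t) s :=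
      (hasDerivWithinAt_id s _).add_const h
    have h1 : HasDerivWithinAt (fun u => x (u + h)) ((1:ℝ) • x' (s + h)) (Icc (t - τ) t) s :=
      HasDerivWithinAt.scomp s (hx' (s + h) hmem) hshift hmaps
    have h2 : HasDerivWithinAt x (x' s) (Icc (t - τ) t) s :=
      (hx' s ⟨hs.1, by linarith [hs.2]⟩).mono (Icc_subset_Icc le_rfl (by linarith))
    have h3 : HasDerivWithinAt (fun u => x' (u + h)) ((1:ℝ) • x'' (s + h)) (Icc (t - τ) t) s :=
      HasDerivWithinAt.scomp s (hx'' (s + h) hmem) hshift hmaps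
    have hres := (h1.sub h2).sub ((h3.const_smul h))
    simp only [one_smul, smul_smul, mul_one] at hres
    exact hres
  have hfinal : ‖g t - g (t - τ)‖ ≤ M * (h ^ 2 / 2) * ‖t - (t - τ)‖ :=
    (convex_Icc (t - τ) t).norm_image_sub_le_of_norm_hasDerivWithin_le
      hgderiv hderiv_bound ⟨le_rfl, by linarith⟩ ⟨by linarith, le_rfl⟩
  rw [hδeq t ⟨by linarith, le_rfl⟩, hδeq (t - τ) ⟨le_rfl, by linarith⟩]
  have hnτ : ‖t - (t - τ)‖ = τ := by
    rw [show t - (t - τ) = τ by ring, Real.norm_eq_abs, abs_of_pos hτ]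
  rw [hnτ] at hfinal
  calc ‖g t - g (t - τ)‖ ≤ M * (h ^ 2 / 2) * τ := hfinal
    _ = τ * (h ^ 2 / 2) * M := by ring
end

section
/- Let (Ω, μ) be a finite measure space, θ ∈ L^∞(μ) real-valued, σ ≥ 0 and 0 < γ ≤ 1, and define g : ℝ → ℝ by g(η) = sgn(η)((|η| + σ)^γ − σ^γ). Let (w_n) be a sequence in L²(μ) converging strongly in L²(μ) to w ∈ L²(μ). Then for every φ ∈ L²(μ): ∫_Ω θ · (g ∘ w_n) · φ dμ → ∫_Ω θ · (g ∘ w) · φ dμ as n → ∞; that is, θ·(g ∘ w_n) converges weakly in L²(μ) to θ·(g ∘ w). -/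
open MeasureTheory Filter Topology
open scoped ENNReal

private lemma measurable_realSign : Measurable Real.sign := by
  have h : Real.sign = fun r : ℝ => if r < 0 then (-1 : ℝ) else if 0 < r then 1 else 0 := rfl
  rw [h]
  exact Measurable.ite (measurableSet_lt measurable_id measurable_const) measurable_const
    (Measurable.ite (measurableSet_lt measurable_const measurable_id) measurable_const
      measurable_const)

private lemma rpow_subadd {γ : ℝ} (hγ0 : 0 < γ) (hγ1 : γ ≤ 1) {a b : ℝ} (ha : 0 ≤ a)
    (hb : 0 ≤ b) : (a + b) ^ γ ≤ a ^ γ + b ^ γ := by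
  have h := NNReal.rpow_add_le_add_rpow a.toNNReal b.toNNReal hγ0.le hγ1
  have h2 := NNReal.coe_le_coe.2 h
  push_cast at h2
  rwa [Real.coe_toNNReal a ha, Real.coe_toNNReal b hb] at h2

private lemma rpow_le_one_add {γ : ℝ} (hγ0 : 0 < γ) (hγ1 : γ ≤ 1) {t : ℝ} (ht : 0 ≤ t) :
    t ^ γ ≤ 1 + t := by
  rcases le_total t 1 with h1 | h1
  · have := Real.rpow_le_one ht h1 hγ0.le
    linarith
  · have h2 : t ^ γ ≤ t ^ (1 : ℝ) := Real.rpow_le_rpow_of_exponent_le h1 hγ1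
    rw [Real.rpow_one] at h2
    linarith

private lemma rpow_le_one_add_sq {q : ℝ} (hq0 : 0 < q) (hq2 : q ≤ 2) {t : ℝ} (ht : 0 ≤ t) :
    t ^ q ≤ 1 + t ^ (2 : ℝ) := by
  rcases le_total t 1 with h1 | h1
  · have := Real.rpow_le_one ht h1 hq0.le
    have := Real.rpow_nonneg ht (2 : ℝ)
    linarith
  · have h2 : t ^ q ≤ t ^ (2 : ℝ) := Real.rpow_le_rpow_of_exponent_le h1 hq2
    linarith

section gprops
variable {σ γ : ℝ} (hσ : 0 ≤ σ) (hγ0 : 0 < γ) (hγ1 : γ ≤ 1) {g : ℝ → ℝ}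
  (hg : ∀ η : ℝ, g η = Real.sign η * ((|η| + σ) ^ γ - σ ^ γ))

include hg

private lemma g_nonneg_eq : ∀ a : ℝ, 0 ≤ a → g a = (a + σ) ^ γ - σ ^ γ := by
  intro a ha
  rcases eq_or_lt_of_le ha with h | h
  · rw [hg, ← h]
    simp
  · rw [hg, Real.sign_of_pos h, abs_of_pos h, one_mul]

include hσ hγ0

private lemma g_odd : ∀ a : ℝ, g (-a) = -g a := by
  intro a
  rw [hg, hg, Real.sign_neg, abs_neg]
  ring

private lemma g_nonneg : ∀ a : ℝ, 0 ≤ a → 0 ≤ g a := by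
  intro a ha
  rw [g_nonneg_eq hg a ha, sub_nonneg]
  exact Real.rpow_le_rpow hσ (by linarith) hγ0.le

include hγ1

private lemma g_abs_le : ∀ a : ℝ, |g a| ≤ |a| ^ γ := by
  have key : ∀ a : ℝ, 0 ≤ a → |g a| ≤ |a| ^ γ := by
    intro a ha
    rw [abs_of_nonneg (g_nonneg hσ hγ0 hg a ha), g_nonneg_eq hg a ha, abs_of_nonneg ha]
    have h := rpow_subadd hγ0 hγ1 ha hσ
    linarith
  intro a
  rcases le_total 0 a with ha | ha
  · exact key a ha
  · have h := key (-a) (by linarith)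
    rw [g_odd hσ hγ0 hg, abs_neg, abs_neg] at h
    exact h

private lemma g_sub_le : ∀ a b : ℝ, 0 ≤ a → 0 ≤ b → g a - g b ≤ |a - b| ^ γ := by
  intro a b ha hb
  rcases le_total a b with hab | hab
  · have h1 : g a ≤ g b := by
      rw [g_nonneg_eq hg a ha, g_nonneg_eq hg b hb]
      have hle : a + σ ≤ b + σ := by linarith
      have := Real.rpow_le_rpow (by linarith : (0:ℝ) ≤ a + σ) hle hγ0.le
      linarith
    have := Real.rpow_nonneg (abs_nonneg (a - b)) γ
    linarith
  · rw [g_nonneg_eq hg a ha, g_nonneg_eq hg b hb, abs_of_nonneg (by linarith : (0:ℝ) ≤ a - b)]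
    have h1 : a + σ = (a - b) + (b + σ) := by ring
    have h2 := rpow_subadd hγ0 hγ1 (by linarith : (0:ℝ) ≤ a - b) (by linarith : (0:ℝ) ≤ b + σ)
    rw [← h1] at h2
    linarith

private lemma g_abs_sub_le_nonneg : ∀ a b : ℝ, 0 ≤ a → 0 ≤ b → |g a - g b| ≤ |a - b| ^ γ := by
  intro a b ha hb
  rw [abs_sub_le_iff]
  refine ⟨g_sub_le hσ hγ0 hγ1 hg a b ha hb, ?_⟩
  have := g_sub_le hσ hγ0 hγ1 hg b a hb ha
  rwa [abs_sub_comm] at this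

private lemma g_abs_sub_le_mixed : ∀ a b : ℝ, 0 ≤ a → b ≤ 0 → |g a - g b| ≤ 2 * |a - b| ^ γ := by
  intro a b ha hb
  have hb' : (0:ℝ) ≤ -b := by linarith
  have hgb : g b = -g (-b) := by rw [← g_odd hσ hγ0 hg, neg_neg]
  have hga := g_nonneg hσ hγ0 hg a ha
  have hgnb := g_nonneg hσ hγ0 hg (-b) hb'
  have habs : |a - b| = a - b := abs_of_nonneg (by linarith)
  have h1 : |g a| ≤ |a| ^ γ := g_abs_le hσ hγ0 hγ1 hg a
  have h2 : |g (-b)| ≤ |(-b)| ^ γ := g_abs_le hσ hγ0 hγ1 hg (-b)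
  rw [abs_of_nonneg hga, abs_of_nonneg ha] at h1
  rw [abs_of_nonneg hgnb, abs_of_nonneg hb'] at h2
  have h3 : a ^ γ ≤ |a - b| ^ γ := by
    rw [habs]; exact Real.rpow_le_rpow ha (by linarith : a ≤ a - b) hγ0.le
  have h4 : (-b) ^ γ ≤ |a - b| ^ γ := by
    rw [habs]; exact Real.rpow_le_rpow hb' (by linarith : -b ≤ a - b) hγ0.le
  rw [hgb]
  have : |g a - -g (-b)| = g a + g (-b) := by
    rw [sub_neg_eq_add, abs_of_nonneg (by linarith)]
  rw [this]
  linarith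

private lemma g_holder : ∀ a b : ℝ, |g a - g b| ≤ 2 * |a - b| ^ γ := by
  intro a b
  rcases le_total 0 a with ha | ha <;> rcases le_total 0 b with hb | hb
  · have h := g_abs_sub_le_nonneg hσ hγ0 hγ1 hg a b ha hb
    have := Real.rpow_nonneg (abs_nonneg (a - b)) γ
    linarith
  · exact g_abs_sub_le_mixed hσ hγ0 hγ1 hg a b ha hb
  · have h := g_abs_sub_le_mixed hσ hγ0 hγ1 hg b a hb ha
    rwa [abs_sub_comm, abs_sub_comm b a] at h
  · have h := g_abs_sub_le_nonneg hσ hγ0 hγ1 hg (-a) (-b) (by linarith) (by linarith)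
    rw [g_odd hσ hγ0 hg, g_odd hσ hγ0 hg] at h
    have e1 : |-g a - -g b| = |g a - g b| := by rw [← abs_neg]; ring_nf
    have e2 : |(-a) - (-b)| = |a - b| := by rw [← abs_neg]; ring_nf
    rw [e1, e2] at h
    have := Real.rpow_nonneg (abs_nonneg (a - b)) γ
    linarith

end gprops

/-- Let `(Ω, μ)` be a finite measure space, `θ ∈ L^∞(μ)`, `σ ≥ 0`,
`0 < γ ≤ 1`, and `g(η) = sgn(η)((|η| + σ)^γ − σ^γ)`.  If `(w_n)` converges strongly in
`L²(μ)` to `w`, then for every `φ ∈ L²(μ)` one has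
`∫ θ·(g∘w_n)·φ dμ → ∫ θ·(g∘w)·φ dμ`, i.e. `θ·(g∘w_n) ⇀ θ·(g∘w)` weakly in `L²(μ)`. -/
theorem stmt13
    {Ω : Type*} [MeasurableSpace Ω] (μ : Measure Ω) [IsFiniteMeasure μ]
    (θ : Ω → ℝ) (hθ : MemLp θ ⊤ μ)
    (σ γ : ℝ) (hσ : 0 ≤ σ) (hγ0 : 0 < γ) (hγ1 : γ ≤ 1)
    (g : ℝ → ℝ)
    (hg : ∀ η : ℝ, g η = Real.sign η * ((|η| + σ) ^ γ - σ ^ γ))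
    (wseq : ℕ → Ω → ℝ) (w : Ω → ℝ)
    (hwseq : ∀ n, MemLp (wseq n) 2 μ) (hw : MemLp w 2 μ)
    (hconv : Tendsto (fun n => eLpNorm (fun x => wseq n x - w x) 2 μ) atTop (nhds 0)) :
    ∀ φ : Ω → ℝ, MemLp φ 2 μ →
      Tendsto (fun n => ∫ x, θ x * g (wseq n x) * φ x ∂μ) atTop
        (nhds (∫ x, θ x * g (w x) * φ x ∂μ)) := by
  intro φ hφ
  -- measurability of g
  have hgm : Measurable g := by
    have h : g = fun η => Real.sign η * ((|η| + σ) ^ γ - σ ^ γ) := funext hg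
    rw [h]
    exact measurable_realSign.mul
      (((continuous_abs.add continuous_const).rpow_const fun x => Or.inr hγ0.le).sub
        continuous_const).measurable
  -- g ∘ v is in L²
  have hgL2 : ∀ v : Ω → ℝ, MemLp v 2 μ → MemLp (fun x => g (v x)) 2 μ := by
    intro v hv
    have hdom : MemLp (fun x => 1 + ‖v x‖) 2 μ := (memLp_const (1 : ℝ)).add hv.norm
    refine hdom.of_le
      (hgm.comp_aemeasurable hv.aestronglyMeasurable.aemeasurable).aestronglyMeasurable ?_
    refine Eventually.of_forall fun x => ?_
    have h1 : |g (v x)| ≤ |v x| ^ γ := g_abs_le hσ hγ0 hγ1 hg (v x)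
    have h2 : |v x| ^ γ ≤ 1 + |v x| := rpow_le_one_add hγ0 hγ1 (abs_nonneg _)
    have h3 : (0 : ℝ) ≤ 1 + |v x| := by positivity
    simp only [Real.norm_eq_abs]
    rw [abs_of_nonneg h3]
    exact h1.trans h2
  -- integrability of the integrands
  have hInt : ∀ v : Ω → ℝ, MemLp v 2 μ → Integrable (fun x => θ x * g (v x) * φ x) μ := by
    intro v hv
    have h122 : (1 : ℝ≥0∞) / 1 = 1 / 2 + 1 / 2 := by
      rw [div_one]
      exact (ENNReal.add_halves 1).symm
    have h1 : MemLp ((fun x => g (v x)) • φ) 1 μ := hφ.smul (hgL2 v hv)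
    have h2 : MemLp (θ • ((fun x => g (v x)) • φ)) 1 μ := h1.smul hθ
    have h3 := memLp_one_iff_integrable.mp h2
    simpa [Pi.smul_apply, smul_eq_mul, mul_assoc, Pi.mul_def] using h3
  refine tendsto_integral_of_L1 _ (hInt w hw).aestronglyMeasurable (Eventually.of_forall fun n => hInt _ (hwseq n)) ?_
  -- constants and exponents
  have hγ2 : γ < 2 := by linarith
  have h2γ : (0 : ℝ) < 2 - γ := by linarith
  set q : ℝ := 2 / (2 - γ) with hqdef
  have hq0 : 0 < q := by positivity
  have hq2 : q ≤ 2 := by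
    rw [hqdef, div_le_iff₀ h2γ]
    linarith
  have hpq : Real.HolderConjugate (2 / γ) q := by
    rw [Real.holderConjugate_iff]
    constructor
    · exact (one_lt_div hγ0).mpr hγ2
    · rw [hqdef]
      field_simp
      ring
  set C : ℝ≥0∞ := eLpNormEssSup θ μ with hCdef
  have hC : C ≠ ∞ := by
    have h := hθ.2
    rw [eLpNorm_exponent_top] at h
    exact h.ne
  set Cr : ℝ := C.toReal with hCrdef
  have hCr : 0 ≤ Cr := ENNReal.toReal_nonneg
  have hθbd : ∀ᵐ x ∂μ, |θ x| ≤ Cr := by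
    filter_upwards [ae_le_eLpNormEssSup (f := θ) (μ := μ)] with x hx
    have h := ENNReal.toReal_mono hC hx
    simpa [Real.norm_eq_abs] using h
  -- generic identity : ∫⁻ ofReal (|v|^2) = (eLpNorm v 2 μ)^2
  have hpt2 : ∀ t : ℝ, ENNReal.ofReal (|t| ^ (2 : ℝ)) = (‖t‖₊ : ℝ≥0∞) ^ (2 : ℝ) := by
    intro t
    rw [← ENNReal.ofReal_rpow_of_nonneg (abs_nonneg t) (by norm_num), ← Real.norm_eq_abs,
      ofReal_norm, enorm_eq_nnnorm]
  have hlint2 : ∀ v : Ω → ℝ,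
      ∫⁻ x, (‖v x‖₊ : ℝ≥0∞) ^ (2 : ℝ) ∂μ = eLpNorm v 2 μ ^ (2 : ℝ) := by
    intro v
    have h2t : ((2 : ℝ≥0∞)).toReal = (2 : ℝ) := by simp
    rw [eLpNorm_eq_lintegral_rpow_enorm_toReal two_ne_zero (by norm_num : (2 : ℝ≥0∞) ≠ ∞), h2t,
      ← ENNReal.rpow_mul]
    norm_num
    rfl
  -- the quantities appearing in the Hölder estimate
  set In : ℕ → ℝ≥0∞ := fun n => ∫⁻ x, (‖wseq n x - w x‖₊ : ℝ≥0∞) ^ (2 : ℝ) ∂μ with hIndef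
  set A : ℕ → Ω → ℝ≥0∞ := fun n x => ENNReal.ofReal (|wseq n x - w x| ^ γ) with hAdef
  set B : Ω → ℝ≥0∞ := fun x => ENNReal.ofReal |φ x| with hBdef
  set J : ℝ≥0∞ := (∫⁻ x, B x ^ q ∂μ) ^ (1 / q) with hJdef
  have hu_meas : ∀ n, AEMeasurable (fun x => wseq n x - w x) μ := fun n =>
    (hwseq n).aestronglyMeasurable.aemeasurable.sub hw.aestronglyMeasurable.aemeasurable
  have hA : ∀ n, AEMeasurable (A n) μ := by
    intro n
    exact (ENNReal.measurable_ofReal.comp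
      ((Real.continuous_rpow_const hγ0.le).comp continuous_abs).measurable).comp_aemeasurable
      (hu_meas n)
  have hB : AEMeasurable B μ :=
    (ENNReal.measurable_ofReal.comp continuous_abs.measurable).comp_aemeasurable
      hφ.aestronglyMeasurable.aemeasurable
  -- J is finite
  have hJ : J ≠ ∞ := by
    have hbd : ∀ x, B x ^ q ≤ 1 + ENNReal.ofReal (|φ x| ^ (2 : ℝ)) := by
      intro x
      rw [hBdef]
      rw [ENNReal.ofReal_rpow_of_nonneg (abs_nonneg _) hq0.le]
      calc ENNReal.ofReal (|φ x| ^ q)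
          ≤ ENNReal.ofReal (1 + |φ x| ^ (2 : ℝ)) :=
            ENNReal.ofReal_le_ofReal (rpow_le_one_add_sq hq0 hq2 (abs_nonneg _))
        _ ≤ ENNReal.ofReal 1 + ENNReal.ofReal (|φ x| ^ (2 : ℝ)) := ENNReal.ofReal_add_le
        _ = 1 + ENNReal.ofReal (|φ x| ^ (2 : ℝ)) := by rw [ENNReal.ofReal_one]
    have hInt2 : (∫⁻ x, B x ^ q ∂μ) ≤ μ Set.univ + eLpNorm φ 2 μ ^ (2 : ℝ) := by
      calc (∫⁻ x, B x ^ q ∂μ)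
          ≤ ∫⁻ x, (1 + ENNReal.ofReal (|φ x| ^ (2 : ℝ))) ∂μ := lintegral_mono hbd
        _ = (∫⁻ _, (1 : ℝ≥0∞) ∂μ) + ∫⁻ x, ENNReal.ofReal (|φ x| ^ (2 : ℝ)) ∂μ :=
            lintegral_add_left measurable_const _
        _ = μ Set.univ + eLpNorm φ 2 μ ^ (2 : ℝ) := by
            rw [lintegral_one]
            congr 1
            rw [← hlint2 φ]
            exact lintegral_congr fun x => hpt2 (φ x)
    have hfin : (∫⁻ x, B x ^ q ∂μ) ≠ ∞ := by
      refine ne_top_of_le_ne_top ?_ hInt2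
      exact (ENNReal.add_lt_top.mpr ⟨measure_lt_top μ _,
        ENNReal.rpow_lt_top_of_nonneg (by norm_num) hφ.eLpNorm_ne_top⟩).ne
    exact (ENNReal.rpow_lt_top_of_nonneg (by positivity) hfin).ne
  -- identity for the first Hölder factor
  have hAf : ∀ n, (∫⁻ x, A n x ^ (2 / γ) ∂μ) ^ (1 / (2 / γ)) = In n ^ (γ / 2) := by
    intro n
    have hpt : ∀ x, A n x ^ (2 / γ) = (‖wseq n x - w x‖₊ : ℝ≥0∞) ^ (2 : ℝ) := by
      intro x
      rw [hAdef]
      rw [ENNReal.ofReal_rpow_of_nonneg (Real.rpow_nonneg (abs_nonneg _) γ)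
        (by positivity : (0:ℝ) ≤ 2 / γ), ← Real.rpow_mul (abs_nonneg _)]
      have hγ2' : γ * (2 / γ) = 2 := by field_simp
      rw [hγ2', hpt2]
    rw [lintegral_congr hpt, one_div_div]
  -- convergence of In to 0
  have hIn0 : Tendsto In atTop (𝓝 0) := by
    have hfe : In = fun n => eLpNorm (fun x => wseq n x - w x) 2 μ ^ (2 : ℝ) :=
      funext fun n => hlint2 _
    rw [hfe]
    have h2 : Tendsto (fun n => eLpNorm (fun x => wseq n x - w x) 2 μ ^ (2 : ℝ)) atTop
        (𝓝 ((0 : ℝ≥0∞) ^ (2 : ℝ))) := (ENNReal.continuous_rpow_const.tendsto 0).comp hconv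
    rwa [ENNReal.zero_rpow_of_pos (by norm_num)] at h2
  -- the main pointwise/integral bound
  have hbound : ∀ n, (∫⁻ x, (‖θ x * g (wseq n x) * φ x - θ x * g (w x) * φ x‖₊ : ℝ≥0∞) ∂μ)
      ≤ ENNReal.ofReal (2 * Cr) * (In n ^ (γ / 2) * J) := by
    intro n
    have step1 : (∫⁻ x, (‖θ x * g (wseq n x) * φ x - θ x * g (w x) * φ x‖₊ : ℝ≥0∞) ∂μ)
        ≤ ∫⁻ x, ENNReal.ofReal (2 * Cr) * (A n x * B x) ∂μ := by
      refine lintegral_mono_ae ?_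
      filter_upwards [hθbd] with x hx
      have e1 : θ x * g (wseq n x) * φ x - θ x * g (w x) * φ x
          = θ x * (g (wseq n x) - g (w x)) * φ x := by ring
      rw [← enorm_eq_nnnorm, ← ofReal_norm, e1]
      have h1 : |g (wseq n x) - g (w x)| ≤ 2 * |wseq n x - w x| ^ γ :=
        g_holder hσ hγ0 hγ1 hg _ _
      have hnorm : ‖θ x * (g (wseq n x) - g (w x)) * φ x‖
          ≤ 2 * Cr * (|wseq n x - w x| ^ γ * |φ x|) := by
        rw [Real.norm_eq_abs, abs_mul, abs_mul]
        have hstep : |θ x| * |g (wseq n x) - g (w x)| ≤ Cr * (2 * |wseq n x - w x| ^ γ) :=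
          mul_le_mul hx h1 (abs_nonneg _) hCr
        have := mul_le_mul_of_nonneg_right hstep (abs_nonneg (φ x))
        calc |θ x| * |g (wseq n x) - g (w x)| * |φ x|
            ≤ Cr * (2 * |wseq n x - w x| ^ γ) * |φ x| := this
          _ = 2 * Cr * (|wseq n x - w x| ^ γ * |φ x|) := by ring
      calc ENNReal.ofReal ‖θ x * (g (wseq n x) - g (w x)) * φ x‖
          ≤ ENNReal.ofReal (2 * Cr * (|wseq n x - w x| ^ γ * |φ x|)) :=
            ENNReal.ofReal_le_ofReal hnorm
        _ = ENNReal.ofReal (2 * Cr) * (A n x * B x) := by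
            rw [ENNReal.ofReal_mul (by positivity : (0:ℝ) ≤ 2 * Cr),
              ENNReal.ofReal_mul (by positivity : (0:ℝ) ≤ |wseq n x - w x| ^ γ)]
    have step2 : (∫⁻ x, ENNReal.ofReal (2 * Cr) * (A n x * B x) ∂μ)
        = ENNReal.ofReal (2 * Cr) * ∫⁻ x, A n x * B x ∂μ :=
      lintegral_const_mul' _ _ ENNReal.ofReal_ne_top
    have step3 : (∫⁻ x, A n x * B x ∂μ) ≤ In n ^ (γ / 2) * J := by
      have h := ENNReal.lintegral_mul_le_Lp_mul_Lq μ hpq (hA n) hB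
      rw [hAf n] at h
      exact h
    calc (∫⁻ x, (‖θ x * g (wseq n x) * φ x - θ x * g (w x) * φ x‖₊ : ℝ≥0∞) ∂μ)
        ≤ ∫⁻ x, ENNReal.ofReal (2 * Cr) * (A n x * B x) ∂μ := step1
      _ = ENNReal.ofReal (2 * Cr) * ∫⁻ x, A n x * B x ∂μ := step2
      _ ≤ ENNReal.ofReal (2 * Cr) * (In n ^ (γ / 2) * J) := mul_le_mul_right step3 _
  -- squeeze
  have hBlim : Tendsto (fun n => ENNReal.ofReal (2 * Cr) * (In n ^ (γ / 2) * J)) atTop (𝓝 0) := by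
    have h1 : Tendsto (fun n => In n ^ (γ / 2 : ℝ)) atTop (𝓝 0) := by
      have h := ((ENNReal.continuous_rpow_const (y := γ / 2)).tendsto 0).comp hIn0
      have h0 : (0 : ℝ≥0∞) ^ (γ / 2 : ℝ) = 0 := ENNReal.zero_rpow_of_pos (by positivity)
      rw [Function.comp_def] at h
      rwa [h0] at h
    have h2 : Tendsto (fun n => In n ^ (γ / 2 : ℝ) * J) atTop (𝓝 0) := by
      have h := ENNReal.Tendsto.mul_const h1 (Or.inr hJ)
      simpa using h
    have h3 := ENNReal.Tendsto.const_mul (a := ENNReal.ofReal (2 * Cr)) h2 (Or.inr ENNReal.ofReal_ne_top)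
    simpa using h3
  exact tendsto_of_tendsto_of_tendsto_of_le_of_le tendsto_const_nhds hBlim
    (fun n => zero_le) hbound
end

section
/- Let X be a real Banach space, τ > 0, and S : X → X a continuous linear operator such that R₋ := I − (τ/2) S is bijective with continuous inverse; set R₊ := I + (τ/2) S and R̂ := R₊ R₋^{-1}. Suppose vectors e, e½, e₊, g, g½, D, d ∈ X satisfy the perturbed IMEX recursion e½ = e + (τ/2) S e½ + (τ/2) g − (τ/2) D and e₊ = e + τ S e½ + τ g½ − τ d. Then the one-step error representation e₊ = R̂ e + (τ/2)(R̂ − I)(g − D) + τ g½ − τ d holds. -/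
/-- Let `X` be a real Banach space, `τ > 0`, `S : X → X` continuous
linear such that `R₋ := I − (τ/2) S` is bijective with continuous inverse `Rinv`; set
`R₊ := I + (τ/2) S` and `R̂ := R₊ R₋⁻¹`.  If `e, e½, e₊, g, g½, D, d` satisfy the perturbed
IMEX recursion `e½ = e + (τ/2) S e½ + (τ/2) g − (τ/2) D` and
`e₊ = e + τ S e½ + τ g½ − τ d`, then the one-step error representation
`e₊ = R̂ e + (τ/2)(R̂ − I)(g − D) + τ g½ − τ d` holds. -/
theorem stmt15
    {X : Type*} [NormedAddCommGroup X] [NormedSpace ℝ X]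
    (τ : ℝ) (hτ : 0 < τ) (S : X →L[ℝ] X)
    (Rinv : X →L[ℝ] X)
    (hleft : ∀ x : X, Rinv (x - (τ / 2) • S x) = x)
    (hright : ∀ y : X, Rinv y - (τ / 2) • S (Rinv y) = y)
    (e ehalf eplus g ghalf D d : X)
    (h1 : ehalf = e + (τ / 2) • S ehalf + (τ / 2) • g - (τ / 2) • D)
    (h2 : eplus = e + τ • S ehalf + τ • ghalf - τ • d) :
    eplus = (Rinv e + (τ / 2) • S (Rinv e))
        + (τ / 2) • ((Rinv (g - D) + (τ / 2) • S (Rinv (g - D))) - (g - D))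
        + τ • ghalf - τ • d := by
  have hE : ehalf = Rinv e + (τ / 2) • Rinv (g - D) := by
    have h := hleft ehalf
    have h' : ehalf - (τ / 2) • S ehalf = e + (τ / 2) • (g - D) := by
      rw [smul_sub]; nth_rewrite 1 [h1]; abel
    rw [h', map_add, map_smul] at h
    exact h.symm
  have hA := hright e
  have hB := hright (g - D)
  rw [h2, hE, map_add, map_smul]
  linear_combination (norm := module) -hA - (τ / 2) • hB
end
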